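/- arXiv:2604.04234 — 2 statements merged into one kernel-verified Lean document; each statement's English description precedes it below -/
import Mathlib

section
/- With the CBF-QP closed-form controller, the safety-filtered closed-loop vector field equals A0·x on {x : g(x) ≥ 0} and Ã·x + b̃ on {x : g(x) < 0}, where A0 = A - BK, Ã = A0 - U·Vᵀ, b̃ = -αd·U, U = B·G⁻¹a/β, and Vᵀ = cᵀ(A0 + αI). Moreover this piecewise-affine vector field is continuous on R^n. -/
open Matrix

noncomputable section

/-- The safety-filtered closed loop is the two-mode piecewise-affine vector field
`A0 x` on `{g ≥ 0}` and `Ã x + b̃` on `{g < 0}`, and it is continuous. -/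
theorem stmt11 {n m : ℕ} (A : Matrix (Fin n) (Fin n) ℝ) (B : Matrix (Fin n) (Fin m) ℝ)
    (K : Matrix (Fin m) (Fin n) ℝ) (c : Fin n → ℝ) (α d : ℝ) (hα : 0 < α)
    (G : Matrix (Fin m) (Fin m) ℝ) (hG : G.PosDef)
    (a : Fin m → ℝ) (ha : a = Bᵀ *ᵥ c) (ha0 : a ≠ 0)
    (β : ℝ) (hβ : β = a ⬝ᵥ G⁻¹ *ᵥ a)
    (A0 : Matrix (Fin n) (Fin n) ℝ) (hA0 : A0 = A - B * K)
    (U V : Fin n → ℝ)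
    (hU : U = β⁻¹ • (B *ᵥ (G⁻¹ *ᵥ a)))
    (hV : V = (A0 + α • (1 : Matrix (Fin n) (Fin n) ℝ))ᵀ *ᵥ c)
    (Atil : Matrix (Fin n) (Fin n) ℝ) (hAtil : Atil = A0 - vecMulVec U V)
    (btil : Fin n → ℝ) (hbtil : btil = -(α * d) • U)
    (g : (Fin n → ℝ) → ℝ)
    (hg : ∀ x, g x = c ⬝ᵥ (A0 + α • (1 : Matrix (Fin n) (Fin n) ℝ)) *ᵥ x + α * d)
    (ustar : (Fin n → ℝ) → (Fin m → ℝ))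
    (hustar : ∀ x, ustar x =
      if 0 ≤ g x then -(K *ᵥ x) else -(K *ᵥ x) - (g x / β) • (G⁻¹ *ᵥ a))
    (f : (Fin n → ℝ) → (Fin n → ℝ))
    (hf : ∀ x, f x = A *ᵥ x + B *ᵥ ustar x) :
    (∀ x, 0 ≤ g x → f x = A0 *ᵥ x) ∧
    (∀ x, g x < 0 → f x = Atil *ᵥ x + btil) ∧
    Continuous f := by
  -- On {g ≥ 0}
  have h1 : ∀ x, 0 ≤ g x → f x = A0 *ᵥ x := by
    intro x hx
    rw [hf, hustar, if_pos hx, hA0]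
    rw [Matrix.mulVec_neg, Matrix.sub_mulVec, Matrix.mulVec_mulVec]
    abel
  -- key formula on {g < 0}
  have h2 : ∀ x, g x < 0 → f x = A0 *ᵥ x - g x • U := by
    intro x hx
    rw [hf, hustar, if_neg (not_le.mpr hx), hU]
    rw [Matrix.mulVec_sub, Matrix.mulVec_neg, Matrix.mulVec_smul, Matrix.mulVec_mulVec,
      hA0, Matrix.sub_mulVec, Matrix.mulVec_mulVec, div_eq_mul_inv, mul_smul]
    abel
  have hgV : ∀ x, g x = V ⬝ᵥ x + α * d := by
    intro x
    rw [hg, hV, Matrix.dotProduct_mulVec, Matrix.mulVec_transpose]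
  have h2' : ∀ x, g x < 0 → f x = Atil *ᵥ x + btil := by
    intro x hx
    rw [h2 x hx, hAtil, hbtil, Matrix.sub_mulVec, hgV x]
    have hvm : vecMulVec U V *ᵥ x = (V ⬝ᵥ x) • U := by
      ext i
      simp [Matrix.vecMulVec_apply, Matrix.mulVec, dotProduct, Finset.mul_sum, mul_comm,
        mul_assoc, mul_left_comm]
    rw [hvm, add_smul]
    module
  refine ⟨h1, h2', ?_⟩
  -- f x = A0 *ᵥ x - min (g x) 0 • U
  have hfx : ∀ x, f x = A0 *ᵥ x - min (g x) 0 • U := by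
    intro x
    rcases le_or_gt 0 (g x) with hx | hx
    · rw [h1 x hx, min_eq_right hx, zero_smul, sub_zero]
    · rw [h2 x hx, min_eq_left hx.le]
  have hcont_g : Continuous g := by
    have : g = fun x => V ⬝ᵥ x + α * d := funext hgV
    rw [this]
    refine Continuous.add ?_ continuous_const
    exact continuous_finset_sum _ fun i _ => (continuous_const.mul (continuous_apply i))
  have hcont_mv : Continuous fun x : Fin n → ℝ => A0 *ᵥ x :=
    (Matrix.mulVecLin A0).continuous_of_finiteDimensional
  have : Continuous fun x => A0 *ᵥ x - min (g x) 0 • U :=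
    hcont_mv.sub (((hcont_g.min continuous_const)).smul continuous_const)
  simpa [← hfx] using this
end
end

section
/- Let A_φ be an n×n real matrix, U, V ∈ R^n, r ≥ 0, and suppose there exists P = Pᵀ ≻ 0 such that the block matrix [[A_φᵀP + PA_φ, PU, rV], [UᵀP, -1, 0], [rVᵀ, 0, -1]] is negative definite. Then for every complex scalar δ with |δ| ≤ r, the matrix A_φ - δ·U·Vᵀ has all eigenvalues with strictly negative real part. -/
open Matrix Complex

noncomputable section

def cplx {n : ℕ} (M : Matrix (Fin n) (Fin n) ℝ) : Matrix (Fin n) (Fin n) ℂ :=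
  M.map (fun x => (x : ℂ))

def cvec {n : ℕ} (v : Fin n → ℝ) : Fin n → ℂ := fun i => (v i : ℂ)

/-!
If `v` is an eigenvector of `A_φ - δ U Vᵀ` for the eigenvalue `z`, the Lyapunov form
`v* (A_φᵀ P + P A_φ) v` equals `2 Re z · v* P v + 2 Re (δ (Vᵀ v) (v* P U))`. Taking the Schur
complement of the `-1` block, the LMI says `A_φᵀ P + P A_φ + (PU)(PU)ᵀ + r² V Vᵀ ≺ 0`, so the
Lyapunov form is below `-|v* P U|² - r² |Vᵀ v|²`. Since `|δ| ≤ r`, the cross term is absorbed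
by AM-GM, leaving `Re z · v* P v < 0`.
-/

open scoped ComplexOrder

namespace Matrix

variable {n m k : Type*} [Fintype n] [Fintype m] [Fintype k]

theorem exists_mulVec_eq_smul_of_mem_spectrum {K : Type*} [Field K] [DecidableEq n]
    {A : Matrix n n K} {z : K} (hz : z ∈ spectrum K A) : ∃ v ≠ 0, A *ᵥ v = z • v := by
  rw [← spectrum_toLin', ← Module.End.hasEigenvalue_iff_mem_spectrum] at hz
  obtain ⟨v, hv⟩ := hz.exists_hasEigenvector
  exact ⟨v, hv.2, Module.End.mem_eigenspace_iff.mp hv.1⟩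

open scoped MatrixOrder in
theorem PosDef.map_ofReal {M : Matrix n n ℝ} (hM : M.PosDef) :
    (M.map ((↑) : ℝ → ℂ)).PosDef := by
  classical
  have hdet : (M.map ((↑) : ℝ → ℂ)).det ≠ 0 := by
    change (Complex.ofRealHom.mapMatrix M).det ≠ 0
    rw [← RingHom.map_det]
    exact Complex.ofReal_ne_zero.mpr hM.det_pos.ne'
  obtain ⟨B, rfl⟩ := CStarAlgebra.nonneg_iff_eq_star_mul_self.mp hM.posSemidef.nonneg
  have hmap : (star B * B).map ((↑) : ℝ → ℂ) = (B.map (↑))ᴴ * B.map (↑) := by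
    change Complex.ofRealHom.mapMatrix (Bᴴ * B) = _
    rw [map_mul, RingHom.mapMatrix_apply, RingHom.mapMatrix_apply, conjTranspose_map]
    · rfl
    · intro x; simp
  rw [hmap] at hdet ⊢
  exact (posSemidef_conjTranspose_mul_self _).posDef_iff_det_ne_zero.mpr hdet

theorem PosDef.neg_add_mul_conjTranspose_of_neg_fromBlocks {𝕜 : Type*} [RCLike 𝕜]
    [DecidableEq k] {Q : Matrix m m 𝕜} {M : Matrix m k 𝕜}
    (h : (-fromBlocks Q M Mᴴ (-1)).PosDef) : (-(Q + M * Mᴴ)).PosDef := by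
  have hQ : Q.IsHermitian := by
    have := h.isHermitian.neg
    rw [neg_neg, isHermitian_fromBlocks_iff] at this
    exact this.1
  refine .of_dotProduct_mulVec_pos (hQ.add (isHermitian_mul_conjTranspose_self M)).neg
    fun x hx => ?_
  have hw : Sum.elim x (Mᴴ *ᵥ x) ≠ 0 := fun h0 => hx (funext fun i => congrFun h0 (Sum.inl i))
  have := h.dotProduct_mulVec_pos hw
  rw [Function.star_sumElim, neg_mulVec, dotProduct_neg, fromBlocks_mulVec,
    sumElim_dotProduct_sumElim] at this
  simpa only [Sum.elim_comp_inl, Sum.elim_comp_inr, neg_mulVec, one_mulVec, add_neg_cancel,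
    dotProduct_zero, add_zero, dotProduct_add, dotProduct_neg, add_mulVec,
    ← mulVec_mulVec] using this

theorem IsHermitian.star_star_dotProduct_mulVec {𝕜 : Type*} [RCLike 𝕜] {P : Matrix n n 𝕜}
    (hP : P.IsHermitian) (x y : n → 𝕜) :
    star (star x ⬝ᵥ (P *ᵥ y)) = star y ⬝ᵥ (P *ᵥ x) := by
  rw [← star_dotProduct_star, star_star, star_mulVec, hP.eq, ← dotProduct_mulVec]

theorem IsHermitian.re_star_dotProduct_lyapunov_mulVec {A P : Matrix n n ℂ} (hP : P.IsHermitian)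
    {v f : n → ℂ} {z : ℂ} (hv : A *ᵥ v = z • v + f) :
    (star v ⬝ᵥ ((Aᴴ * P + P * A) *ᵥ v)).re =
      2 * z.re * (star v ⬝ᵥ (P *ᵥ v)).re + 2 * (star v ⬝ᵥ (P *ᵥ f)).re := by
  have hAdj : star v ⬝ᵥ ((Aᴴ * P) *ᵥ v) = star (star v ⬝ᵥ (P *ᵥ (A *ᵥ v))) := by
    rw [hP.star_star_dotProduct_mulVec, ← mulVec_mulVec, dotProduct_mulVec, ← star_mulVec]
  have him : (star v ⬝ᵥ (P *ᵥ v)).im = 0 :=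
    Complex.conj_eq_iff_im.mp (hP.star_star_dotProduct_mulVec v v)
  rw [add_mulVec, dotProduct_add, hAdj, ← mulVec_mulVec, hv, mulVec_add, mulVec_smul,
    dotProduct_add, dotProduct_smul]
  simp only [Complex.star_def, Complex.add_re, Complex.conj_re, smul_eq_mul, Complex.mul_re, him]
  ring

theorem star_dotProduct_vecMulVec_star_mulVec (a v : n → ℂ) :
    star v ⬝ᵥ (vecMulVec a (star a) *ᵥ v) = (‖star a ⬝ᵥ v‖ ^ 2 : ℝ) := by
  rw [vecMulVec_mulVec, star_dotProduct, Complex.sq_norm, Complex.normSq_eq_conj_mul_self]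
  simp [mul_comm]

theorem re_lt_zero_of_mem_spectrum_sub_smul_vecMulVec [DecidableEq n] {A P : Matrix n n ℂ}
    {u w : n → ℂ} {r : ℝ} (hP : P.PosDef)
    (hLMI : (-(Aᴴ * P + P * A + vecMulVec (P *ᵥ u) (star (P *ᵥ u))
      + (r ^ 2 : ℂ) • vecMulVec (star w) w)).PosDef)
    {δ : ℂ} (hδ : ‖δ‖ ≤ r) {z : ℂ} (hz : z ∈ spectrum ℂ (A - δ • vecMulVec u w)) :
    z.re < 0 := by
  obtain ⟨v, hv0, hv⟩ := exists_mulVec_eq_smul_of_mem_spectrum hz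
  set β := w ⬝ᵥ v
  set γ := star v ⬝ᵥ (P *ᵥ u)
  have hAv : A *ᵥ v = z • v + (δ * β) • u := by
    rw [← hv, sub_mulVec, smul_mulVec, vecMulVec_mulVec, op_smul_eq_smul, smul_smul,
      sub_add_cancel]
  have hlyap := hP.isHermitian.re_star_dotProduct_lyapunov_mulVec hAv
  rw [mulVec_smul, dotProduct_smul, smul_eq_mul] at hlyap
  have hwv := star_dotProduct_vecMulVec_star_mulVec (star w) v
  rw [star_star] at hwv
  have hLMIv := hLMI.re_dotProduct_pos hv0
  rw [neg_mulVec, dotProduct_neg, add_mulVec, add_mulVec, dotProduct_add, dotProduct_add,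
    smul_mulVec, dotProduct_smul, star_dotProduct_vecMulVec_star_mulVec, hwv,
    star_dotProduct (P *ᵥ u) v, norm_star] at hLMIv
  have hcross : |(δ * β * γ).re| ≤ r * ‖β‖ * ‖γ‖ := by
    grw [Complex.abs_re_le_norm, norm_mul, norm_mul, hδ]
  have hp := hP.re_dotProduct_pos hv0
  simp only [RCLike.re_to_complex, smul_eq_mul, ← ofReal_pow, neg_re, add_re, re_ofReal_mul,
    ofReal_re] at hLMIv hp
  nlinarith [abs_le.mp hcross, sq_nonneg (‖γ‖ - r * ‖β‖)]

end Matrix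

theorem stmt15_general {n : ℕ} (Aφ : Matrix (Fin n) (Fin n) ℝ) (U V : Fin n → ℝ) (r : ℝ)
    (P : Matrix (Fin n) (Fin n) ℝ) (hP : P.PosDef)
    (M12 : Matrix (Fin n) (Fin 2) ℝ)
    (hM12 : ∀ i j, M12 i j = if j = 0 then (P *ᵥ U) i else r * V i)
    (hLMI : (-(Matrix.fromBlocks (Aφᵀ * P + P * Aφ) M12 M12ᵀ
        (-(1 : Matrix (Fin 2) (Fin 2) ℝ)))).PosDef) :
    ∀ δ : ℂ, ‖δ‖ ≤ r →
      ∀ z ∈ spectrum ℂ (cplx Aφ - δ • vecMulVec (cvec U) (cvec V)), z.re < 0 := by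
  intro δ hδ z hz
  have hMM : M12 * M12ᵀ = vecMulVec (P *ᵥ U) (P *ᵥ U) + r ^ 2 • vecMulVec V V := by
    ext i j
    simp only [mul_apply, hM12, transpose_apply, mul_ite, ite_mul, Fin.sum_univ_two,
      ↓reduceIte, one_ne_zero, Matrix.add_apply, vecMulVec_apply, Matrix.smul_apply, smul_eq_mul,
      add_right_inj]
    ring
  have hSchur : (-(Aφᵀ * P + P * Aφ + M12 * M12ᵀ)).PosDef := by
    rw [← conjTranspose_eq_transpose_of_trivial] at hLMI ⊢
    exact hLMI.neg_add_mul_conjTranspose_of_neg_fromBlocks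
  have hcplx : cplx (-(Aφᵀ * P + P * Aφ + vecMulVec (P *ᵥ U) (P *ᵥ U) + r ^ 2 • vecMulVec V V)) =
      -((cplx Aφ)ᴴ * cplx P + cplx P * cplx Aφ
        + vecMulVec (cplx P *ᵥ cvec U) (star (cplx P *ᵥ cvec U))
        + (r ^ 2 : ℂ) • vecMulVec (star (cvec V)) (cvec V)) := by
    ext i j
    simp [cplx, cvec, mul_apply, vecMulVec_apply, mulVec, dotProduct]
  refine re_lt_zero_of_mem_spectrum_sub_smul_vecMulVec (P := cplx P) hP.map_ofReal ?_ hδ hz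
  rw [hMM, ← add_assoc] at hSchur
  rw [← hcplx]
  exact hSchur.map_ofReal

/-- Bounded-real-lemma LMI certificate: if the block matrix
`[[AᵀP + PA, PU, rV], [UᵀP, -1, 0], [rVᵀ, 0, -1]]` is negative definite, then
`A_φ - δ U Vᵀ` is Hurwitz for every complex `δ` with `|δ| ≤ r`. -/
theorem stmt15 {n : ℕ} (Aφ : Matrix (Fin n) (Fin n) ℝ) (U V : Fin n → ℝ) (r : ℝ)
    (hr : 0 ≤ r) (P : Matrix (Fin n) (Fin n) ℝ) (hP : P.PosDef) (hPsymm : P.IsSymm)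
    (M12 : Matrix (Fin n) (Fin 2) ℝ)
    (hM12 : ∀ i j, M12 i j = if j = 0 then (P *ᵥ U) i else r * V i)
    (hLMI : (-(Matrix.fromBlocks (Aφᵀ * P + P * Aφ) M12 M12ᵀ
        (-(1 : Matrix (Fin 2) (Fin 2) ℝ)))).PosDef) :
    ∀ δ : ℂ, ‖δ‖ ≤ r →
      ∀ z ∈ spectrum ℂ (cplx Aφ - δ • vecMulVec (cvec U) (cvec V)), z.re < 0 :=
  stmt15_general Aφ U V r P hP M12 hM12 hLMI
end
end
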